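/- arXiv:1102.1311 — 2 statements merged into one kernel-verified Lean document; each statement's English description precedes it below -/
import Mathlib

section
/- Let X be a type, e : X, k : ℕ, and let β γ : (Fin k → X) → X be two k-ary operations on X such that each of β and γ admits e as a pointwise unit, and such that β and γ satisfy the (k,k)-interchange law. Then β = γ, and moreover β is symmetric: for every permutation σ : Equiv.Perm (Fin k) and every v : Fin k → X, β (v ∘ σ) = β v. -/
/-- Arity-k core of Proposition 3.6: two k-ary operations admitting a common pointwise
unit and satisfying the (k,k)-interchange law coincide and are symmetric. -/
theorem kary_interchange_eq_and_symm {X : Type*} (e : X) (k : ℕ)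
    (β γ : (Fin k → X) → X)
    (hβ : ∀ (i : Fin k) (x : X), β (Function.update (fun _ => e) i x) = x)
    (hγ : ∀ (i : Fin k) (x : X), γ (Function.update (fun _ => e) i x) = x)
    (hint : ∀ a : Fin k → Fin k → X,
      β (fun i => γ (fun j => a i j)) = γ (fun j => β (fun i => a i j))) :
    β = γ ∧ ∀ (σ : Equiv.Perm (Fin k)) (v : Fin k → X), β (v ∘ σ) = β v := by
  have hupd : ∀ (i : Fin k) (x : X),
      (fun j => if j = i then x else e) = Function.update (fun _ => e) i x := by
    intro i x; funext j; simp [Function.update_apply]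
  have heq : β = γ := by
    funext v
    have := hint (fun i j => if i = j then v i else e)
    have h1 : (fun i => γ fun j => if i = j then v i else e) = v := by
      funext i
      have : (fun j => if i = j then v i else e) = Function.update (fun _ => e) i (v i) := by
        funext j; simp [Function.update_apply, eq_comm]
      rw [this, hγ]
    have h2 : (fun j => β fun i => if i = j then v i else e) = v := by
      funext j
      have : (fun i => if i = j then v i else e) = Function.update (fun _ => e) j (v j) := by
        funext i; by_cases h : i = j <;> simp [Function.update_apply, h]
      rw [this, hβ]
    rw [h1, h2] at this
    exact this
  refine ⟨heq, fun σ v => ?_⟩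
  have := hint (fun i j => if σ j = i then v i else e)
  have h1 : (fun i => γ fun j => if σ j = i then v i else e) = v := by
    funext i
    have : (fun j => if σ j = i then v i else e)
        = Function.update (fun _ => e) (σ.symm i) (v i) := by
      funext j
      by_cases h : σ j = i
      · have hj : j = σ.symm i := by simp [← h]
        subst hj; simp [h]
      · have hj : j ≠ σ.symm i := by
          intro hj; exact h (by simp [hj])
        simp [h, Function.update_apply, hj]
    rw [this, hγ]
  have h2 : (fun j => β fun i => if σ j = i then v i else e) = v ∘ σ := by
    funext j
    have : (fun i => if σ j = i then v i else e)
        = Function.update (fun _ => e) (σ j) (v (σ j)) := by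
      funext i; by_cases h : σ j = i
      · subst h; simp
      · simp [Function.update_apply, h, Ne.symm h]
    rw [this, hβ]; rfl
  rw [h1, h2] at this
  rw [this, ← heq]
end

section
/- Let X be a type, e : X, k : ℕ, and let S T : Set ((Fin k → X) → X) be nonempty sets of k-ary operations on X such that every element of S ∪ T admits e as a pointwise unit, and every β ∈ S and γ ∈ T satisfy the (k,k)-interchange law. Then there exists a single k-ary operation μ : (Fin k → X) → X with S = {μ} and T = {μ}, and μ is symmetric: μ (v ∘ σ) = μ v for every permutation σ : Equiv.Perm (Fin k) and every v : Fin k → X. -/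
/-- Family form of Proposition 3.6: two nonempty sets of k-ary operations with a common
pointwise unit satisfying all pairwise (k,k)-interchange relations collapse to a single
symmetric operation. -/
theorem kary_interchange_families {X : Type*} (e : X) (k : ℕ)
    (S T : Set ((Fin k → X) → X)) (hS : S.Nonempty) (hT : T.Nonempty)
    (hunit : ∀ β ∈ S ∪ T, ∀ (i : Fin k) (x : X),
      β (Function.update (fun _ => e) i x) = x)
    (hint : ∀ β ∈ S, ∀ γ ∈ T, ∀ a : Fin k → Fin k → X,
      β (fun i => γ (fun j => a i j)) = γ (fun j => β (fun i => a i j))) :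
    ∃ μ : (Fin k → X) → X, S = {μ} ∧ T = {μ} ∧
      ∀ (σ : Equiv.Perm (Fin k)) (v : Fin k → X), μ (v ∘ σ) = μ v := by
  -- Every β ∈ S equals every γ ∈ T.
  have key : ∀ β ∈ S, ∀ γ ∈ T, β = γ := by
    intro β hβ γ hγ
    funext v
    have h := hint β hβ γ hγ (fun i j => Function.update (fun _ => e) i (v i) j)
    have hL : (fun i => γ (fun j => Function.update (fun _ => e) i (v i) j)) = v := by
      funext i
      exact hunit γ (Or.inr hγ) i (v i)
    have hR : (fun j => β (fun i => Function.update (fun _ => e) i (v i) j)) = v := by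
      funext j
      have : (fun i => Function.update (fun _ => e) i (v i) j)
          = Function.update (fun _ => e) j (v j) := by
        funext i
        by_cases hij : i = j
        · subst hij; simp
        · simp [Function.update_of_ne hij, Function.update_of_ne (Ne.symm hij)]
      rw [this]
      exact hunit β (Or.inl hβ) j (v j)
    rw [hL, hR] at h
    exact h
  obtain ⟨β, hβ⟩ := hS
  obtain ⟨γ, hγ⟩ := hT
  refine ⟨β, ?_, ?_, ?_⟩
  · ext f
    constructor
    · intro hf
      exact (key f hf γ hγ).trans (key β hβ γ hγ).symm
    · rintro rfl; exact hβ
  · ext f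
    constructor
    · intro hf
      exact (key β hβ f hf).symm
    · intro hf
      rw [show f = β from hf, key β hβ γ hγ]; exact hγ
  · intro σ v
    have hβγ := key β hβ γ hγ
    have h := hint β hβ γ hγ (fun i j => Function.update (fun _ => e) (σ i) (v (σ i)) j)
    have hL : (fun i => γ (fun j => Function.update (fun _ => e) (σ i) (v (σ i)) j))
        = v ∘ σ := by
      funext i
      exact hunit γ (Or.inr hγ) (σ i) (v (σ i))
    have hR : (fun j => β (fun i => Function.update (fun _ => e) (σ i) (v (σ i)) j)) = v := by
      funext j
      have : (fun i => Function.update (fun _ => e) (σ i) (v (σ i)) j)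
          = Function.update (fun _ => e) (σ.symm j) (v j) := by
        funext i
        by_cases hij : i = σ.symm j
        · subst hij; rw [Equiv.apply_symm_apply]; simp
        · have h2 : j ≠ σ i := fun h => hij (by rw [h]; simp)
          rw [Function.update_of_ne h2, Function.update_of_ne hij]
      rw [this]
      exact hunit β (Or.inl hβ) (σ.symm j) (v j)
    rw [hL, hR] at h
    rw [h, hβγ]
end
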